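/- Let $c \in (0, 1/10)$ be real, let $Q \subseteq \mathbb{Z}$ be a proper 2-dimensional arithmetic progression, and let $X \subseteq Q$ be a set with $|X| \geq 100$ and $|X| \geq (1-c)|Q|$. Then $Q \subseteq 41X - 40X$. -/

import Mathlib

/-- `Q` is a proper 2-dimensional arithmetic progression. -/
def IsProper2Prog (Q : Finset ℤ) : Prop :=
  ∃ (a₀ a₁ a₂ : ℤ) (L₁ L₂ : ℕ),
    Q = ((Finset.range (L₁ + 1)) ×ˢ (Finset.range (L₂ + 1))).image
      (fun p : ℕ × ℕ => a₀ + (p.1 : ℤ) * a₁ + (p.2 : ℤ) * a₂) ∧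
    Q.card = (L₁ + 1) * (L₂ + 1)

/-- The set `mX - nX` of sums of `m` elements of `X` minus sums of `n` elements of `X`. -/
def sumsetSub (m n : ℕ) (X : Finset ℤ) : Set ℤ :=
  {z | ∃ (x : Fin m → ℤ) (y : Fin n → ℤ), (∀ i, x i ∈ X) ∧ (∀ j, y j ∈ X) ∧
    z = (∑ i, x i) - (∑ j, y j)}

/-!
Write `Q = {a₀ + i a₁ + j a₂ : i ≤ L₁, j ≤ L₂}`. Since `|X| > 9|Q|/10`, averaging shows that more
than two thirds of the rows `j` meet `X` in more than two thirds of their points. In a set `A` of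
density `> 2/3` in `{0, …, L}`, Cauchy–Davenport gives `|A + A| + |t + A| > 2L + 1`, so every
`t ≤ L` is of the form `a + b - c` with `a, b, c ∈ A`. Applied within a dense row this puts every
point of that row in `2X - X`; applied to the set of dense rows it writes every point of `Q` as
`q₁ + q₂ - q₃` with each `qᵢ` on a dense row, so `Q ⊆ 5X - 4X ⊆ 41X - 40X`.
-/

open Finset Pointwise

theorem exists_add_eq_add_of_two_mul_lt_three_mul_card {L t : ℕ} {A : Finset ℕ}
    (hA : A ⊆ range (L + 1)) (hcard : 2 * (L + 1) < 3 * #A) (ht : t ≤ L) :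
    ∃ a ∈ A, ∃ b ∈ A, ∃ c ∈ A, a + b = t + c := by
  have hne : A.Nonempty := card_pos.mp (by omega)
  have hsum : A + A ⊆ range (2 * L + 1) := by
    rintro _ hx
    obtain ⟨a, ha, b, hb, rfl⟩ := mem_add.mp hx
    have := mem_range.mp (hA ha)
    have := mem_range.mp (hA hb)
    exact mem_range.mpr (by omega)
  have hshift : A.image (t + ·) ⊆ range (2 * L + 1) := by
    rintro _ hx
    obtain ⟨c, hc, rfl⟩ := mem_image.mp hx
    have := mem_range.mp (hA hc)
    exact mem_range.mpr (by omega)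
  have hCD : #A + #A - 1 ≤ #(A + A) := cauchy_davenport_add_of_linearOrder_isCancelAdd hne hne
  have hcard_shift : #(A.image (t + ·)) = #A := card_image_of_injective _ (add_right_injective t)
  obtain ⟨s, hs⟩ := inter_nonempty_of_card_lt_card_add_card hsum hshift (by rw [card_range, hcard_shift]; omega)
  obtain ⟨a, ha, b, hb, rfl⟩ := mem_add.mp (mem_inter.mp hs).1
  obtain ⟨c, hc, hcs⟩ := mem_image.mp (mem_inter.mp hs).2
  exact ⟨a, ha, b, hb, c, hc, hcs.symm⟩

theorem two_mul_card_lt_three_mul_card_filter {ι : Type*} (s : Finset ι) (f : ι → ℕ) (K : ℕ)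
    (hf : ∀ i ∈ s, f i ≤ K) (hdense : 9 * (K * #s) < 10 * ∑ i ∈ s, f i) :
    2 * #s < 3 * #{i ∈ s | 2 * K < 3 * f i} := by
  set J := {i ∈ s | 2 * K < 3 * f i}
  set J' := {i ∈ s | ¬ 2 * K < 3 * f i}
  have hJJ' : #J + #J' = #s := card_filter_add_card_filter_not _
  have hsum_J : ∑ i ∈ J, 3 * f i ≤ #J * (3 * K) :=
    sum_le_card_nsmul J _ _ fun i hi => by have := hf i (mem_filter.mp hi).1; omega
  have hsum_J' : ∑ i ∈ J', 3 * f i ≤ #J' * (2 * K) :=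
    sum_le_card_nsmul J' _ _ fun i hi => by have := (mem_filter.mp hi).2; omega
  have htotal : 3 * ∑ i ∈ s, f i ≤ #J * (3 * K) + #J' * (2 * K) := by
    rw [mul_sum, ← sum_filter_add_sum_filter_not s fun i => 2 * K < 3 * f i]
    exact add_le_add hsum_J hsum_J'
  have hK : K * (7 * #s) < K * (10 * #J) := by nlinarith
  have := Nat.lt_of_mul_lt_mul_left hK
  omega

theorem add_mem_sumsetSub {X : Finset ℤ} {m n m' n' : ℕ} {z w : ℤ}
    (hz : z ∈ sumsetSub m n X) (hw : w ∈ sumsetSub m' n' X) :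
    z + w ∈ sumsetSub (m + m') (n + n') X := by
  obtain ⟨x, y, hx, hy, rfl⟩ := hz
  obtain ⟨x', y', hx', hy', rfl⟩ := hw
  refine ⟨Fin.append x x', Fin.append y y', fun i => ?_, fun i => ?_, ?_⟩
  · refine Fin.addCases (fun i => ?_) (fun i => ?_) i <;> simp [hx, hx']
  · refine Fin.addCases (fun i => ?_) (fun i => ?_) i <;> simp [hy, hy']
  · simp only [Fin.sum_univ_add, Fin.append_left, Fin.append_right]
    ring

theorem neg_mem_sumsetSub {X : Finset ℤ} {m n : ℕ} {z : ℤ} (hz : z ∈ sumsetSub m n X) :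
    -z ∈ sumsetSub n m X := by
  obtain ⟨x, y, hx, hy, rfl⟩ := hz
  exact ⟨y, x, hy, hx, by ring⟩

theorem zero_mem_sumsetSub {X : Finset ℤ} {x₀ : ℤ} (hx₀ : x₀ ∈ X) (k : ℕ) :
    (0 : ℤ) ∈ sumsetSub k k X :=
  ⟨fun _ => x₀, fun _ => x₀, fun _ => hx₀, fun _ => hx₀, by simp⟩

theorem add_sub_mem_sumsetSub {X : Finset ℤ} {x y z : ℤ} (hx : x ∈ X) (hy : y ∈ X)
    (hz : z ∈ X) : x + y - z ∈ sumsetSub 2 1 X :=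
  ⟨![x, y], ![z], by simp [Fin.forall_fin_two, hx, hy], by simp [hz], by simp⟩

theorem sumsetSub_subset_add {X : Finset ℤ} {x₀ : ℤ} (hx₀ : x₀ ∈ X) (m n k : ℕ) :
    sumsetSub m n X ⊆ sumsetSub (m + k) (n + k) X := fun z hz => by
  simpa using add_mem_sumsetSub hz (zero_mem_sumsetSub hx₀ k)

section Rows

variable (a₀ a₁ a₂ : ℤ) (L₁ : ℕ) (X : Finset ℤ)

def progRow (j : ℕ) : Finset ℕ :=
  {i ∈ range (L₁ + 1) | a₀ + (i : ℤ) * a₁ + (j : ℤ) * a₂ ∈ X}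

theorem card_le_sum_card_progRow (L₂ : ℕ)
    (hX : X ⊆ (range (L₁ + 1) ×ˢ range (L₂ + 1)).image
      fun p : ℕ × ℕ => a₀ + (p.1 : ℤ) * a₁ + (p.2 : ℤ) * a₂) :
    #X ≤ ∑ j ∈ range (L₂ + 1), #(progRow a₀ a₁ a₂ L₁ X j) := by
  set g := fun p : ℕ × ℕ => a₀ + (p.1 : ℤ) * a₁ + (p.2 : ℤ) * a₂
  have hcover : X ⊆ {p ∈ range (L₁ + 1) ×ˢ range (L₂ + 1) | g p ∈ X}.image g := fun x hx => by
    obtain ⟨p, hp, rfl⟩ := mem_image.mp (hX hx)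
    exact mem_image_of_mem g (mem_filter.mpr ⟨hp, hx⟩)
  calc #X ≤ #({p ∈ range (L₁ + 1) ×ˢ range (L₂ + 1) | g p ∈ X}) :=
        (card_le_card hcover).trans card_image_le
    _ = ∑ j ∈ range (L₂ + 1), #(progRow a₀ a₁ a₂ L₁ X j) := by
        simp only [card_filter, sum_product_right, progRow, g]

theorem mem_sumsetSub_of_dense_progRow {j l : ℕ}
    (hdense : 2 * (L₁ + 1) < 3 * #(progRow a₀ a₁ a₂ L₁ X j)) (hl : l ≤ L₁) :
    a₀ + (l : ℤ) * a₁ + (j : ℤ) * a₂ ∈ sumsetSub 2 1 X := by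
  obtain ⟨i₁, h₁, i₂, h₂, i₃, h₃, hi⟩ :=
    exists_add_eq_add_of_two_mul_lt_three_mul_card (filter_subset _ _) hdense hl
  have key := add_sub_mem_sumsetSub (mem_filter.mp h₁).2 (mem_filter.mp h₂).2 (mem_filter.mp h₃).2
  have hi' : (i₁ : ℤ) + i₂ = l + i₃ := by exact_mod_cast hi
  convert key using 1
  linear_combination -a₁ * hi'

theorem mem_sumsetSub_five_four {L₂ : ℕ} {J : Finset ℕ} (hJ : J ⊆ range (L₂ + 1))
    (hJcard : 2 * (L₂ + 1) < 3 * #J)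
    (hJdense : ∀ j ∈ J, 2 * (L₁ + 1) < 3 * #(progRow a₀ a₁ a₂ L₁ X j))
    {l₁ l₂ : ℕ} (hl₁ : l₁ ≤ L₁) (hl₂ : l₂ ≤ L₂) :
    a₀ + (l₁ : ℤ) * a₁ + (l₂ : ℤ) * a₂ ∈ sumsetSub 5 4 X := by
  obtain ⟨j₁, h₁, j₂, h₂, j₃, h₃, hj⟩ :=
    exists_add_eq_add_of_two_mul_lt_three_mul_card hJ hJcard hl₂
  have key := add_mem_sumsetSub
    (add_mem_sumsetSub (mem_sumsetSub_of_dense_progRow a₀ a₁ a₂ L₁ X (hJdense j₁ h₁) hl₁)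
      (mem_sumsetSub_of_dense_progRow a₀ a₁ a₂ L₁ X (hJdense j₂ h₂) (Nat.zero_le L₁)))
    (neg_mem_sumsetSub
      (mem_sumsetSub_of_dense_progRow a₀ a₁ a₂ L₁ X (hJdense j₃ h₃) (Nat.zero_le L₁)))
  have hj' : (j₁ : ℤ) + j₂ = l₂ + j₃ := by exact_mod_cast hj
  convert key using 1
  push_cast
  linear_combination -a₂ * hj'

end Rows

theorem stmt1_general (c : ℝ) (hc1 : c < 1 / 10)
    (Q X : Finset ℤ) (hQ : IsProper2Prog Q) (hXQ : X ⊆ Q)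
    (hdens : (1 - c) * (Q.card : ℝ) ≤ (X.card : ℝ)) :
    (Q : Set ℤ) ⊆ sumsetSub 41 40 X := by
  obtain ⟨a₀, a₁, a₂, L₁, L₂, rfl, hQcard⟩ := hQ
  have hXdense : 9 * ((L₁ + 1) * (L₂ + 1)) < 10 * #X := by
    rw [hQcard] at hdens
    have hpos : (0 : ℝ) < ((L₁ + 1) * (L₂ + 1) : ℕ) := by positivity
    exact_mod_cast (by nlinarith : (9 : ℝ) * ((L₁ + 1) * (L₂ + 1) : ℕ) < 10 * #X)
  obtain ⟨x₀, hx₀⟩ : X.Nonempty := card_pos.mp (by omega)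
  have hrows := two_mul_card_lt_three_mul_card_filter (range (L₂ + 1))
    (fun j => #(progRow a₀ a₁ a₂ L₁ X j)) (L₁ + 1)
    (fun j _ => (card_filter_le _ _).trans_eq (card_range _))
    (by have := card_le_sum_card_progRow a₀ a₁ a₂ L₁ X L₂ hXQ; rw [card_range]; omega)
  rw [card_range] at hrows
  intro q hq
  obtain ⟨⟨l₁, l₂⟩, hl, rfl⟩ := mem_image.mp hq
  obtain ⟨hl₁, hl₂⟩ := mem_product.mp hl
  exact sumsetSub_subset_add hx₀ 5 4 36 <| mem_sumsetSub_five_four a₀ a₁ a₂ L₁ X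
    (filter_subset _ _) hrows (fun j hj => (mem_filter.mp hj).2)
    (Nat.lt_succ_iff.mp (mem_range.mp hl₁)) (Nat.lt_succ_iff.mp (mem_range.mp hl₂))

theorem stmt1 (c : ℝ) (hc0 : 0 < c) (hc1 : c < 1 / 10)
    (Q X : Finset ℤ) (hQ : IsProper2Prog Q) (hXQ : X ⊆ Q)
    (hX100 : 100 ≤ X.card) (hdens : (1 - c) * (Q.card : ℝ) ≤ (X.card : ℝ)) :
    (Q : Set ℤ) ⊆ sumsetSub 41 40 X :=
  stmt1_general c hc1 Q X hQ hXQ hdens
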